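/- arXiv:2207.01632 — 2 statements merged into one kernel-verified Lean document; each statement's English description precedes it below -/
import Mathlib

section
/- For every m ≥ 0, Conv(∇_m ∪ ∇_{m+1}) = Conv((1,0), (0,1), (-1,0), (-m,-1), (-(m+1),-1)), and there are reductions Conv(∇_m ∪ ∇_{m+1}) ⊃ ∇_m and Conv(∇_m ∪ ∇_{m+1}) ⊃ ∇_{m+1} each removing exactly one primitive lattice point. -/
open Set

/-- A lattice point of `ℤ^d ⊆ ℝ^d`. -/
def IsLatticePoint {d : ℕ} (x : Fin d → ℝ) : Prop := ∀ i, ∃ n : ℤ, x i = (n : ℝ)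

/-- A lattice polytope: the convex hull of finitely many lattice points. -/
def IsLatticePolytope {d : ℕ} (P : Set (Fin d → ℝ)) : Prop :=
  ∃ S : Finset (Fin d → ℝ), (∀ x ∈ S, IsLatticePoint x) ∧ P = convexHull ℝ (S : Set (Fin d → ℝ))

/-- The polar dual `P* = {u | ⟨u,v⟩ ≥ -1 for all v ∈ P}`. -/
def polarDual {d : ℕ} (P : Set (Fin d → ℝ)) : Set (Fin d → ℝ) :=
  {u | ∀ v ∈ P, (-1 : ℝ) ≤ ∑ i, u i * v i}

/-- `[P]`: the convex hull of the lattice points of `P`. -/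
def latticeHull {d : ℕ} (P : Set (Fin d → ℝ)) : Set (Fin d → ℝ) :=
  convexHull ℝ {x ∈ P | IsLatticePoint x}

/-- A primitive lattice point. -/
def IsPrimitivePt {d : ℕ} (x : Fin d → ℝ) : Prop :=
  IsLatticePoint x ∧ x ≠ 0 ∧
    ∀ (n : ℕ) (u : Fin d → ℝ), IsLatticePoint u → x = n • u → n = 1

/-- A Fano polytope: a lattice polytope with the origin as interior point,
all of whose vertices are primitive lattice points. -/
def IsFanoPolytope {d : ℕ} (P : Set (Fin d → ℝ)) : Prop :=
  IsLatticePolytope P ∧ 0 ∈ interior P ∧ ∀ v ∈ Set.extremePoints ℝ P, IsPrimitivePt v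

/-- Canonical: the origin is the unique interior lattice point. -/
def IsCanonical {d : ℕ} (P : Set (Fin d → ℝ)) : Prop :=
  ∀ x ∈ interior P, IsLatticePoint x → x = 0

/-- Terminal: the lattice points are exactly the vertices together with the origin. -/
def IsTerminal {d : ℕ} (P : Set (Fin d → ℝ)) : Prop :=
  {x ∈ P | IsLatticePoint x} = Set.extremePoints ℝ P ∪ {0}

/-- The Fano polygon `∇_{-∞} = Conv(e₁, e₂, -e₁-e₂)`, corresponding to `ℙ²`. -/
def nablaInf : Set (Fin 2 → ℝ) :=
  convexHull ℝ ({![1,0], ![0,1], ![-1,-1]} : Set (Fin 2 → ℝ))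

/-- The Fano polygon `∇_m = Conv(e₁, e₂, -e₁, -m·e₁-e₂)`, corresponding to `𝔽_m`. -/
def nabla (m : ℕ) : Set (Fin 2 → ℝ) :=
  convexHull ℝ ({![1,0], ![0,1], ![-1,0], ![-(m:ℝ),-1]} : Set (Fin 2 → ℝ))

/-- The polygon `Conv(∇_m ∪ ∇_{m+1})` in explicit vertex form. -/
def nablaUnion (m : ℕ) : Set (Fin 2 → ℝ) :=
  convexHull ℝ
    ({![1,0], ![0,1], ![-1,0], ![-(m:ℝ),-1], ![-((m:ℝ)+1),-1]} : Set (Fin 2 → ℝ))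

/-! Every primitive lattice point of `nablaUnion m` is a vertex: the pentagon lies in the
half-planes `y ≤ 1`, `-y ≤ 1`, `x + y ≤ 1`, `-x + (m + 2) y ≤ m + 2`, `x - (m + 1) y ≤ 1` and
`-x ≤ m + 1`, which leave only the five vertices and the lattice points `(p, 0)`, and on
the axis only `(±1, 0)` are primitive. Each of `∇_m`, `∇_{m+1}` contains four of the five
vertices and is separated from the fifth by a half-plane, so passing to it loses exactly one
primitive point. -/

lemma IsLatticePoint.exists_eq_vec {x : Fin 2 → ℝ} (hx : IsLatticePoint x) :
    ∃ p q : ℤ, x = ![(p : ℝ), q] := by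
  obtain ⟨p, hp⟩ := hx 0
  obtain ⟨q, hq⟩ := hx 1
  exact ⟨p, q, by ext i; fin_cases i <;> simp [hp, hq]⟩

lemma isLatticePoint_vec (p q : ℤ) : IsLatticePoint ![(p : ℝ), q] := by
  intro i; fin_cases i
  exacts [⟨p, rfl⟩, ⟨q, rfl⟩]

lemma isPrimitivePt_of_abs_eq_one {d : ℕ} {x : Fin d → ℝ} (hx : IsLatticePoint x) {i : Fin d}
    (hi : |x i| = 1) : IsPrimitivePt x := by
  refine ⟨hx, fun h0 => by simp [h0] at hi, fun n u hu hxu => ?_⟩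
  obtain ⟨k, hk⟩ := hu i
  have hnk : |(n : ℤ) * k| = 1 := by
    rw [hxu, Pi.smul_apply, hk, nsmul_eq_mul] at hi
    exact_mod_cast hi
  rw [Int.abs_eq_natAbs, Int.natAbs_mul, Int.natAbs_natCast] at hnk
  exact Nat.eq_one_of_mul_eq_one_right (by exact_mod_cast hnk)

lemma abs_eq_one_of_isPrimitivePt_vec_zero {p : ℤ} (hp : IsPrimitivePt ![(p : ℝ), 0]) :
    |p| = 1 := by
  have hp_eq : (p : ℝ) = |(p : ℝ)| * p.sign := by
    exact_mod_cast (by rw [mul_comm, Int.sign_mul_abs] : p = |p| * p.sign)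
  have h := hp.2.2 p.natAbs ![(p.sign : ℝ), 0] (by simpa using isLatticePoint_vec p.sign 0)
    (by ext i; fin_cases i <;> simp [← hp_eq])
  rw [Int.abs_eq_natAbs, h, Nat.cast_one]

lemma le_of_mem_convexHull_of_forall_le {S : Set (Fin 2 → ℝ)} {a b c : ℝ}
    (h : ∀ v ∈ S, a * v 0 + b * v 1 ≤ c) {x : Fin 2 → ℝ} (hx : x ∈ convexHull ℝ S) :
    a * x 0 + b * x 1 ≤ c :=
  convexHull_min h (convex_halfSpace_le ⟨fun v w => by simp only [Pi.add_apply]; ring,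
    fun t v => by simp only [Pi.smul_apply, smul_eq_mul]; ring⟩ c) hx

lemma le_of_mem_nabla {m : ℕ} {a b c : ℝ} (h₁ : a ≤ c) (h₂ : b ≤ c) (h₃ : -a ≤ c)
    (h₄ : -(a * m) - b ≤ c) {x : Fin 2 → ℝ} (hx : x ∈ nabla m) : a * x 0 + b * x 1 ≤ c := by
  refine le_of_mem_convexHull_of_forall_le ?_ hx
  simp only [mem_insert_iff, mem_singleton_iff, forall_eq_or_imp, forall_eq,
    Matrix.cons_val_zero, Matrix.cons_val_one, Matrix.cons_val_fin_one]
  refine ⟨?_, ?_, ?_, ?_⟩ <;> linarith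

lemma le_of_mem_nablaUnion {m : ℕ} {a b c : ℝ} (h₁ : a ≤ c) (h₂ : b ≤ c) (h₃ : -a ≤ c)
    (h₄ : -(a * m) - b ≤ c) (h₅ : -(a * (m + 1)) - b ≤ c) {x : Fin 2 → ℝ}
    (hx : x ∈ nablaUnion m) : a * x 0 + b * x 1 ≤ c := by
  refine le_of_mem_convexHull_of_forall_le ?_ hx
  simp only [mem_insert_iff, mem_singleton_iff, forall_eq_or_imp, forall_eq,
    Matrix.cons_val_zero, Matrix.cons_val_one, Matrix.cons_val_fin_one]
  refine ⟨?_, ?_, ?_, ?_, ?_⟩ <;> linarith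

lemma eq_vertex_of_mem_nablaUnion {m : ℕ} {p q : ℤ} (hx : ![(p : ℝ), q] ∈ nablaUnion m)
    (hprim : IsPrimitivePt ![(p : ℝ), q]) :
    (p = 1 ∧ q = 0) ∨ (p = 0 ∧ q = 1) ∨ (p = -1 ∧ q = 0) ∨ (p = -m ∧ q = -1) ∨
      (p = -(m + 1) ∧ q = -1) := by
  have hm : (0 : ℝ) ≤ m := m.cast_nonneg
  have half (a b c : ℝ) (h₁ : a ≤ c) (h₂ : b ≤ c) (h₃ : -a ≤ c) (h₄ : -(a * m) - b ≤ c)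
      (h₅ : -(a * (m + 1)) - b ≤ c) : a * p + b * q ≤ c := by
    simpa using le_of_mem_nablaUnion h₁ h₂ h₃ h₄ h₅ hx
  have hq_le : (q : ℝ) ≤ 1 := by
    linarith [half 0 1 1 (by norm_num) (by norm_num) (by norm_num) (by norm_num) (by norm_num)]
  have hq_ge : -1 ≤ (q : ℝ) := by
    linarith [half 0 (-1) 1 (by norm_num) (by norm_num) (by norm_num) (by norm_num) (by norm_num)]
  have hsum : (p + q : ℝ) ≤ 1 := by
    linarith [half 1 1 1 (by norm_num) (by norm_num) (by norm_num) (by linarith) (by linarith)]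
  have htop : -p + (m + 2) * q ≤ (m + 2 : ℝ) := by
    linarith [half (-1) (m + 2) (m + 2) (by linarith) le_rfl (by linarith) (by linarith)
      (by linarith)]
  have hbot : p - (m + 1) * q ≤ (1 : ℝ) := by
    linarith [half 1 (-(m + 1)) 1 le_rfl (by linarith) (by linarith) (by linarith) (by linarith)]
  have hleft : -p ≤ (m + 1 : ℝ) := by
    linarith [half (-1) 0 (m + 1) (by linarith) (by linarith) (by linarith) (by linarith)
      (by linarith)]
  have hq : q = -1 ∨ q = 0 ∨ q = 1 := by
    have : q ≤ 1 := by exact_mod_cast hq_le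
    have : -1 ≤ q := by exact_mod_cast hq_ge
    omega
  rcases hq with rfl | rfl | rfl <;> push_cast at hsum htop hbot
  · have : p ≤ -m := by exact_mod_cast (by linarith : (p : ℝ) ≤ -m)
    have : -m - 1 ≤ p := by exact_mod_cast (by linarith : -m - 1 ≤ (p : ℝ))
    omega
  · have : p ≤ 1 := by exact_mod_cast (by linarith : (p : ℝ) ≤ 1)
    have := abs_eq_one_of_isPrimitivePt_vec_zero (by simpa using hprim)
    rw [abs_eq zero_le_one] at this
    omega
  · have : p = 0 := by exact_mod_cast (by linarith : (p : ℝ) = 0)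
    omega

lemma primitivePts_nablaUnion (m : ℕ) :
    {x ∈ nablaUnion m | IsPrimitivePt x} =
      {![1,0], ![0,1], ![-1,0], ![-(m:ℝ),-1], ![-((m:ℝ)+1),-1]} := by
  ext x
  constructor
  · rintro ⟨hx, hprim⟩
    obtain ⟨p, q, rfl⟩ := hprim.1.exists_eq_vec
    rcases eq_vertex_of_mem_nablaUnion hx hprim with
      ⟨rfl, rfl⟩ | ⟨rfl, rfl⟩ | ⟨rfl, rfl⟩ | ⟨rfl, rfl⟩ | ⟨rfl, rfl⟩ <;> simp
  · intro hx
    refine ⟨subset_convexHull ℝ _ hx, ?_⟩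
    rcases hx with rfl | rfl | rfl | rfl | rfl
    · exact isPrimitivePt_of_abs_eq_one (i := 0) (by simpa using isLatticePoint_vec 1 0)
        (by simp)
    · exact isPrimitivePt_of_abs_eq_one (i := 1) (by simpa using isLatticePoint_vec 0 1)
        (by simp)
    · exact isPrimitivePt_of_abs_eq_one (i := 0) (by simpa using isLatticePoint_vec (-1) 0)
        (by simp)
    · exact isPrimitivePt_of_abs_eq_one (i := 1) (by simpa using isLatticePoint_vec (-m) (-1))
        (by simp)
    · exact isPrimitivePt_of_abs_eq_one (i := 1)
        (by simpa using isLatticePoint_vec (-(m + 1)) (-1)) (by simp)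

lemma nabla_subset_nablaUnion (m : ℕ) : nabla m ⊆ nablaUnion m :=
  convexHull_mono (by simp [insert_subset_iff])

lemma nabla_succ_subset_nablaUnion (m : ℕ) : nabla (m + 1) ⊆ nablaUnion m :=
  convexHull_mono (by simp [insert_subset_iff])

lemma convexHull_nabla_union_nabla_succ (m : ℕ) :
    convexHull ℝ (nabla m ∪ nabla (m + 1)) = nablaUnion m := by
  refine (convexHull_min (union_subset (nabla_subset_nablaUnion m)
    (nabla_succ_subset_nablaUnion m)) (convex_convexHull ℝ _)).antisymm
    (convexHull_mono (subset_trans ?_ (union_subset_union (subset_convexHull ℝ _)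
      (subset_convexHull ℝ _))))
  intro x hx
  simp only [mem_insert_iff, mem_singleton_iff, mem_union] at hx ⊢
  push_cast
  tauto

lemma vertex_succ_notMem_nabla (m : ℕ) : ![-((m : ℝ) + 1), -1] ∉ nabla m := fun h => by
  have hm : (0 : ℝ) ≤ m := m.cast_nonneg
  have := le_of_mem_nabla (a := -1) (b := -1) (c := m + 1) (by linarith) (by linarith)
    (by linarith) (by linarith) h
  norm_num at this

lemma vertex_notMem_nabla_succ (m : ℕ) : ![-(m : ℝ), -1] ∉ nabla (m + 1) := fun h => by
  have hm : (0 : ℝ) ≤ m := m.cast_nonneg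
  have := le_of_mem_nabla (a := 1) (b := -(m + 2)) (c := 1) le_rfl (by linarith)
    (by linarith) (by push_cast; linarith) h
  norm_num at this

lemma ncard_sep_eq_add_one {α : Type*} {p : α → Prop} {P Q S : Set α} {a : α}
    (hQ : {x ∈ Q | p x} = S) (hS : S.Finite) (haS : a ∈ S) (haP : a ∉ P) (hPQ : P ⊆ Q)
    (hSP : S \ {a} ⊆ P) :
    {x ∈ Q | p x}.ncard = {x ∈ P | p x}.ncard + 1 := by
  have hP : {x ∈ P | p x} = S \ {a} := by
    ext x
    constructor
    · rintro ⟨hxP, hpx⟩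
      exact ⟨hQ ▸ ⟨hPQ hxP, hpx⟩, fun hxa => haP (hxa ▸ hxP)⟩
    · intro hx
      exact ⟨hSP hx, (hQ ▸ hx.1 : x ∈ {x ∈ Q | p x}).2⟩
  rw [hQ, hP, ncard_sdiff_singleton_add_one haS hS]

/-- `Conv(∇_m ∪ ∇_{m+1})` equals the explicit pentagon, and there are
reductions from it to `∇_m` and to `∇_{m+1}`, each removing exactly one primitive
lattice point. -/
theorem nabla_union_reductions (m : ℕ) :
    convexHull ℝ (nabla m ∪ nabla (m+1)) = nablaUnion m ∧
    nabla m ⊆ nablaUnion m ∧ nabla (m+1) ⊆ nablaUnion m ∧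
    {x ∈ nablaUnion m | IsPrimitivePt x}.ncard =
      {x ∈ nabla m | IsPrimitivePt x}.ncard + 1 ∧
    {x ∈ nablaUnion m | IsPrimitivePt x}.ncard =
      {x ∈ nabla (m+1) | IsPrimitivePt x}.ncard + 1 := by
  refine ⟨convexHull_nabla_union_nabla_succ m, nabla_subset_nablaUnion m,
    nabla_succ_subset_nablaUnion m, ?_, ?_⟩
  · refine ncard_sep_eq_add_one (primitivePts_nablaUnion m) (toFinite _) (by simp)
      (vertex_succ_notMem_nabla m) (nabla_subset_nablaUnion m) ?_
    rintro x ⟨hx, hxa⟩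
    apply subset_convexHull
    simp only [mem_insert_iff, mem_singleton_iff] at hx hxa ⊢
    tauto
  · refine ncard_sep_eq_add_one (primitivePts_nablaUnion m) (toFinite _) (by simp)
      (vertex_notMem_nabla_succ m) (nabla_succ_subset_nablaUnion m) ?_
    rintro x ⟨hx, hxa⟩
    apply subset_convexHull
    simp only [mem_insert_iff, mem_singleton_iff] at hx hxa ⊢
    push_cast
    tauto
end

section
/- For a lattice polygon in R^2 containing the origin in its interior, being canonical (the origin is the unique interior lattice point) is equivalent to being reflexive (the polar dual is a lattice polygon). -/
open Set

/-!
Reflexive implies canonical in any dimension: if `x ≠ 0` is an interior lattice point of `P`, then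
`(1 + t) • x ∈ P` for small `t > 0`, so `u ⬝ᵥ x > -1`, hence `u ⬝ᵥ x ≥ 0` by integrality, for every
lattice vertex `u` of `P*`, and therefore for every `u ∈ P*`. But `P` is bounded, so `-t • x ∈ P*`
for small `t > 0`.

Conversely, `P*` is compact and convex, so by Krein–Milman it is a lattice polytope once its extreme
points are lattice points. An extreme point `u` of `P*` lies on two constraints `u ⬝ᵥ a = -1`,
`u ⬝ᵥ b = -1` given by vertices `a, b` of `P` with `cross a b ≠ 0`. If `|cross a b| ≥ 2`, the
sublattice `ℤa + ℤb` is proper, so the half-open parallelogram on `a, b` contains a nonzero lattice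
point, which after reflection through the centre lies in the triangle `0ab`. Off the edge `[a, b]`
it is a second interior lattice point of `P`; on the edge it can replace `b`, with a smaller
`|cross a b|`. When `|cross a b| = 1` the system `u ⬝ᵥ a = u ⬝ᵥ b = -1` is unimodular, so `u` is a
lattice point.
-/

open Topology Bornology Submodule

theorem ContinuousAt.exists_pos_apply_mem_and_apply_neg_mem {E : Type*} [TopologicalSpace E]
    {f : ℝ → E} {s : Set E} (hf : ContinuousAt f 0) (hs : s ∈ 𝓝 (f 0)) :
    ∃ t > 0, f t ∈ s ∧ f (-t) ∈ s := by
  obtain ⟨ε, hε, hball⟩ := Metric.mem_nhds_iff.mp (hf hs)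
  refine ⟨ε / 2, half_pos hε, hball ?_, hball ?_⟩ <;>
    simp [abs_of_pos hε, half_lt_self hε]

theorem Convex.smul_add_smul_mem_interior {E : Type*} [AddCommGroup E] [Module ℝ E]
    [TopologicalSpace E] [IsTopologicalAddGroup E] [ContinuousConstSMul ℝ E] {P : Set E}
    (hP : Convex ℝ P) (h0 : 0 ∈ interior P) {a b : E} (ha : a ∈ P) (hb : b ∈ P) {γ δ : ℝ}
    (hγ : 0 ≤ γ) (hδ : 0 ≤ δ) (hγδ : γ + δ < 1) : γ • a + δ • b ∈ interior P := by
  rcases (add_nonneg hγ hδ).eq_or_lt with h | h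
  · obtain ⟨rfl, rfl⟩ : γ = 0 ∧ δ = 0 := ⟨by linarith, by linarith⟩
    simpa using h0
  have he : (γ / (γ + δ)) • a + (δ / (γ + δ)) • b ∈ P :=
    hP ha hb (by positivity) (by positivity) (by field_simp)
  convert hP.combo_interior_self_mem_interior h0 he (sub_pos.mpr hγδ) h.le (by ring) using 1
  simp only [smul_zero, zero_add, smul_add, smul_smul]
  congr 2 <;> field_simp

section Polar

variable {d : ℕ}

theorem isLatticePoint_iff_mem_span {x : Fin d → ℝ} :
    IsLatticePoint x ↔ x ∈ span ℤ (range (Pi.basisFun ℝ (Fin d))) := by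
  simp [IsLatticePoint, (Pi.basisFun ℝ (Fin d)).mem_span_iff_repr_mem ℤ, eq_comm]

theorem Bornology.IsBounded.finite_setOf_isLatticePoint {E : Set (Fin d → ℝ)} (hE : IsBounded E) :
    {x ∈ E | IsLatticePoint x}.Finite :=
  (ZSpan.setFinite_inter (Pi.basisFun ℝ (Fin d)) hE).subset
    fun _ hx ↦ ⟨hx.1, isLatticePoint_iff_mem_span.mp hx.2⟩

theorem IsLatticePoint.dotProduct {u x : Fin d → ℝ} (hu : IsLatticePoint u)
    (hx : IsLatticePoint x) : ∃ n : ℤ, u ⬝ᵥ x = n := by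
  choose a ha using hu
  choose b hb using hx
  exact ⟨∑ i, a i * b i, by simp [_root_.dotProduct, ha, hb]⟩

theorem mem_polarDual_iff {P : Set (Fin d → ℝ)} {u : Fin d → ℝ} :
    u ∈ polarDual P ↔ ∀ v ∈ P, -1 ≤ u ⬝ᵥ v :=
  Iff.rfl

theorem convex_polarDual (P : Set (Fin d → ℝ)) : Convex ℝ (polarDual P) := by
  intro u hu w hw a b ha hb hab
  rw [mem_polarDual_iff] at hu hw ⊢
  intro v hv
  rw [add_dotProduct, smul_dotProduct, smul_dotProduct, smul_eq_mul, smul_eq_mul]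
  nlinarith [hu v hv, hw v hv]

theorem isClosed_polarDual (P : Set (Fin d → ℝ)) : IsClosed (polarDual P) := by
  simp only [polarDual, ofPred_forall]
  exact isClosed_iInter fun v ↦ isClosed_iInter fun _ ↦
    isClosed_le continuous_const (continuous_id.dotProduct continuous_const)

theorem polarDual_convexHull (s : Set (Fin d → ℝ)) :
    polarDual (convexHull ℝ s) = polarDual s := by
  refine Subset.antisymm (fun u hu v hv ↦ hu v (subset_convexHull ℝ s hv)) fun u hu ↦ ?_
  have hconv : Convex ℝ {v | -1 ≤ u ⬝ᵥ v} :=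
    convex_halfSpace_ge ⟨dotProduct_add u, fun c v ↦ dotProduct_smul c u v⟩ (-1)
  exact fun v hv ↦ convexHull_min hu hconv hv

theorem zero_mem_interior_polarDual {S : Set (Fin d → ℝ)} (hS : S.Finite) :
    0 ∈ interior (polarDual S) := by
  have hopen : IsOpen {u : Fin d → ℝ | ∀ v ∈ S, -1 < u ⬝ᵥ v} := by
    simp only [ofPred_forall]
    exact hS.isOpen_biInter fun v _ ↦
      isOpen_lt continuous_const (continuous_id.dotProduct continuous_const)
  exact interior_maximal (fun u hu v hv ↦ (hu v hv).le) hopen (by simp)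

theorem isBounded_polarDual {P : Set (Fin d → ℝ)} (h0 : 0 ∈ interior P) :
    IsBounded (polarDual P) := by
  choose t ht hpos hneg using fun i : Fin d ↦
    (continuous_id.smul continuous_const).continuousAt.exists_pos_apply_mem_and_apply_neg_mem
      (f := (· • Pi.single i 1)) (by simpa using mem_interior_iff_mem_nhds.mp h0)
  refine (IsBounded.pi fun i ↦ Metric.isBounded_Icc (-(t i)⁻¹) (t i)⁻¹).subset fun u hu i _ ↦ ?_
  have h1 := mem_polarDual_iff.mp hu _ (hpos i)
  have h2 := mem_polarDual_iff.mp hu _ (hneg i)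
  simp only [dotProduct_smul, dotProduct_single, smul_eq_mul, mul_one] at h1 h2
  have := mul_inv_cancel₀ (ht i).ne'
  constructor <;> nlinarith [inv_pos.mpr (ht i)]

theorem isCompact_polarDual {P : Set (Fin d → ℝ)} (h0 : 0 ∈ interior P) :
    IsCompact (polarDual P) :=
  Metric.isCompact_of_isClosed_isBounded (isClosed_polarDual P) (isBounded_polarDual h0)

theorem eq_zero_of_mem_extremePoints_polarDual {S : Set (Fin d → ℝ)} (hS : S.Finite)
    {u w : Fin d → ℝ} (hu : u ∈ (polarDual S).extremePoints ℝ)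
    (hw : ∀ s ∈ S, u ⬝ᵥ s = -1 → w ⬝ᵥ s = 0) : w = 0 := by
  set U := {v : Fin d → ℝ | ∀ s ∈ {s ∈ S | u ⬝ᵥ s ≠ -1}, -1 < v ⬝ᵥ s}
  have hU : IsOpen U := by
    simp only [U, ofPred_forall]
    exact (hS.subset (sep_subset _ _)).isOpen_biInter fun s _ ↦
      isOpen_lt continuous_const (continuous_id.dotProduct continuous_const)
  have huU : u ∈ U := fun s hs ↦ lt_of_le_of_ne (hu.1 s hs.1) (Ne.symm hs.2)
  have hmem : ∀ c : ℝ, u + c • w ∈ U → u + c • w ∈ polarDual S := by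
    refine fun c hc ↦ mem_polarDual_iff.mpr fun s hs ↦ ?_
    by_cases hact : u ⬝ᵥ s = -1
    · simp [add_dotProduct, smul_dotProduct, hact, hw s hs hact]
    · exact (hc s ⟨hs, hact⟩).le
  obtain ⟨t, ht, hpos, hneg⟩ :=
    (continuous_const.add (continuous_id.smul continuous_const)).continuousAt
      |>.exists_pos_apply_mem_and_apply_neg_mem (f := fun c : ℝ ↦ u + c • w)
      (by simpa using hU.mem_nhds huU)
  have hseg : u ∈ openSegment ℝ (u + t • w) (u - t • w) := mem_openSegment_add_sub u (t • w)
  have hext := hu.2 (hmem t hpos) (by simpa [sub_eq_add_neg] using hmem (-t) hneg) hseg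
  simpa [ht.ne'] using hext

theorem IsCompact.isLatticePolytope {K : Set (Fin d → ℝ)} (hK : IsCompact K)
    (hconv : Convex ℝ K) (hlat : ∀ x ∈ K.extremePoints ℝ, IsLatticePoint x) :
    IsLatticePolytope K := by
  have hfin : (K.extremePoints ℝ).Finite :=
    hK.isBounded.finite_setOf_isLatticePoint.subset fun x hx ↦ ⟨extremePoints_subset hx, hlat x hx⟩
  refine ⟨hfin.toFinset, by simpa using hlat, ?_⟩
  rw [hfin.coe_toFinset, ← (hfin.isCompact_convexHull ℝ).isClosed.closure_eq,
    closure_convexHull_extremePoints hK hconv]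

theorem IsLatticePoint.dotProduct_nonneg_of_mem_polarDual {P : Set (Fin d → ℝ)} {u x : Fin d → ℝ}
    (hu : IsLatticePoint u) (huP : u ∈ polarDual P) (hx : IsLatticePoint x)
    (hxP : x ∈ interior P) : 0 ≤ u ⬝ᵥ x := by
  obtain ⟨t, ht, hxt, -⟩ :=
    ((continuous_const.add continuous_id).smul continuous_const).continuousAt
      |>.exists_pos_apply_mem_and_apply_neg_mem (f := fun t : ℝ ↦ (1 + t) • x)
      (by simpa using mem_interior_iff_mem_nhds.mp hxP)
  have hle := mem_polarDual_iff.mp huP _ hxt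
  obtain ⟨n, hn⟩ := hu.dotProduct hx
  rw [dotProduct_smul, hn, smul_eq_mul] at hle
  suffices 0 ≤ n by rw [hn]; exact_mod_cast this
  by_contra! hneg
  have : (n : ℝ) ≤ -1 := by exact_mod_cast Int.le_sub_one_of_lt hneg
  nlinarith

theorem isCanonical_convexHull_of_isLatticePolytope_polarDual {S : Set (Fin d → ℝ)}
    (hS : S.Finite) (hdual : IsLatticePolytope (polarDual (convexHull ℝ S))) :
    IsCanonical (convexHull ℝ S) := by
  obtain ⟨T, hTlat, hT⟩ := hdual
  intro x hx hxlat
  have hhalf : Convex ℝ {u : Fin d → ℝ | 0 ≤ u ⬝ᵥ x} :=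
    convex_halfSpace_ge ⟨fun u w ↦ add_dotProduct u w x, fun c u ↦ smul_dotProduct c u x⟩ 0
  have hnonneg : ∀ u ∈ polarDual (convexHull ℝ S), 0 ≤ u ⬝ᵥ x := by
    rw [hT]
    refine convexHull_min (fun u hu ↦ ?_) hhalf
    exact (hTlat u hu).dotProduct_nonneg_of_mem_polarDual
      (hT ▸ subset_convexHull ℝ _ hu) hxlat hx
  have hnhds : polarDual (convexHull ℝ S) ∈ 𝓝 0 := by
    simpa [polarDual_convexHull] using mem_interior_iff_mem_nhds.mp (zero_mem_interior_polarDual hS)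
  obtain ⟨t, ht, -, hneg⟩ :=
    (continuous_id.smul continuous_const).continuousAt.exists_pos_apply_mem_and_apply_neg_mem
      (f := fun t : ℝ ↦ t • x) (by simpa using hnhds)
  have hle := hnonneg _ hneg
  rw [smul_dotProduct, smul_eq_mul] at hle
  have hxx : 0 ≤ x ⬝ᵥ x := Finset.sum_nonneg fun i _ ↦ mul_self_nonneg (x i)
  exact dotProduct_self_eq_zero.mp (by nlinarith)

end Polar

section Plane

def cross {R : Type*} [CommRing R] (x y : Fin 2 → R) : R := x 0 * y 1 - x 1 * y 0

theorem cross_smul_add_smul_left {R : Type*} [CommRing R] (γ δ : R) (a b : Fin 2 → R) :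
    cross (γ • a + δ • b) b = γ * cross a b := by
  simp only [cross, Pi.add_apply, Pi.smul_apply, smul_eq_mul]; ring

theorem cross_smul_add_smul_right {R : Type*} [CommRing R] (γ δ : R) (a b : Fin 2 → R) :
    cross a (γ • a + δ • b) = δ * cross a b := by
  simp only [cross, Pi.add_apply, Pi.smul_apply, smul_eq_mul]; ring

theorem cross_smul_add_smul_smul_add_smul {R : Type*} [CommRing R] (s t s' t' : R)
    (a b : Fin 2 → R) :
    cross (s • a + t • b) (s' • a + t' • b) = (s * t' - t * s') * cross a b := by
  simp only [cross, Pi.add_apply, Pi.smul_apply, smul_eq_mul]; ring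

theorem exists_eq_smul_add_smul_of_cross_ne_zero {K : Type*} [Field K] {a b : Fin 2 → K}
    (h : cross a b ≠ 0) (x : Fin 2 → K) : ∃ α β : K, x = α • a + β • b := by
  refine ⟨cross x b / cross a b, cross a x / cross a b,
    funext_iff.mpr (Fin.forall_fin_two.mpr ⟨?_, ?_⟩)⟩ <;>
  · simp only [cross, Pi.add_apply, Pi.smul_apply, smul_eq_mul] at h ⊢
    rw [div_mul_eq_mul_div, div_mul_eq_mul_div, ← add_div, eq_div_iff h]
    ring

theorem IsLatticePoint.cross {a b : Fin 2 → ℝ} (ha : IsLatticePoint a) (hb : IsLatticePoint b) :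
    ∃ n : ℤ, cross a b = n := by
  obtain ⟨⟨a₀, ha₀⟩, ⟨a₁, ha₁⟩⟩ := And.intro (ha 0) (ha 1)
  obtain ⟨⟨b₀, hb₀⟩, ⟨b₁, hb₁⟩⟩ := And.intro (hb 0) (hb 1)
  exact ⟨a₀ * b₁ - a₁ * b₀, by simp [_root_.cross, ha₀, ha₁, hb₀, hb₁]⟩

theorem exists_isLatticePoint_notMem_span_pair {a b : Fin 2 → ℝ} (ha : IsLatticePoint a)
    (hb : IsLatticePoint b) (h : 2 ≤ |cross a b|) :
    ∃ z, IsLatticePoint z ∧ z ∉ span ℤ {a, b} := by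
  by_contra! hspan
  have hsingle (i : Fin 2) : IsLatticePoint (Pi.single i 1 : Fin 2 → ℝ) := fun j ↦
    ⟨if j = i then 1 else 0, by by_cases hj : j = i <;> simp [hj]⟩
  obtain ⟨s, t, hst⟩ := mem_span_pair.mp (hspan _ (hsingle 0))
  obtain ⟨s', t', hst'⟩ := mem_span_pair.mp (hspan _ (hsingle 1))
  rw [← Int.cast_smul_eq_zsmul ℝ, ← Int.cast_smul_eq_zsmul ℝ] at hst hst'
  obtain ⟨n, hn⟩ := ha.cross hb
  have hunit : (s * t' - t * s') * n = 1 := by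
    have : ((s * t' - t * s' : ℤ) : ℝ) * n = 1 := by
      rw [← hn, Int.cast_sub, Int.cast_mul, Int.cast_mul,
        ← cross_smul_add_smul_smul_add_smul, hst, hst']
      simp [_root_.cross]
    exact_mod_cast this
  rcases Int.eq_one_or_neg_one_of_mul_eq_one' hunit with ⟨-, rfl⟩ | ⟨-, rfl⟩ <;>
    norm_num [hn] at h

theorem exists_isLatticePoint_ne_zero_mem_parallelogram {a b : Fin 2 → ℝ}
    (ha : IsLatticePoint a) (hb : IsLatticePoint b) (h : 2 ≤ |cross a b|) :
    ∃ z, IsLatticePoint z ∧ z ≠ 0 ∧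
      ∃ γ ∈ Ico (0 : ℝ) 1, ∃ δ ∈ Ico (0 : ℝ) 1, z = γ • a + δ • b := by
  obtain ⟨z, hz, hzspan⟩ := exists_isLatticePoint_notMem_span_pair ha hb h
  obtain ⟨α, β, hαβ⟩ :=
    exists_eq_smul_add_smul_of_cross_ne_zero (abs_pos.mp (by linarith)) z
  have hmem : ⌊α⌋ • a + ⌊β⌋ • b ∈ span ℤ {a, b} :=
    mem_span_pair.mpr ⟨_, _, rfl⟩
  refine ⟨z - (⌊α⌋ • a + ⌊β⌋ • b), ?_, ?_, Int.fract α, ⟨Int.fract_nonneg α, Int.fract_lt_one α⟩,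
    Int.fract β, ⟨Int.fract_nonneg β, Int.fract_lt_one β⟩, ?_⟩
  · rw [isLatticePoint_iff_mem_span] at ha hb hz ⊢
    exact sub_mem hz (add_mem (zsmul_mem ha _) (zsmul_mem hb _))
  · exact fun h0 ↦ hzspan (sub_eq_zero.mp h0 ▸ hmem)
  · rw [hαβ, Int.fract, Int.fract, sub_smul, sub_smul, ← Int.cast_smul_eq_zsmul ℝ,
      ← Int.cast_smul_eq_zsmul ℝ]
    abel

theorem exists_isLatticePoint_ne_zero_mem_triangle {a b : Fin 2 → ℝ}
    (ha : IsLatticePoint a) (hb : IsLatticePoint b) (h : 2 ≤ |cross a b|) :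
    ∃ z, IsLatticePoint z ∧ z ≠ 0 ∧ ∃ γ δ : ℝ, 0 ≤ γ ∧ 0 ≤ δ ∧ γ < 1 ∧ δ < 1 ∧ γ + δ ≤ 1 ∧
      z = γ • a + δ • b := by
  obtain ⟨z, hz, hz0, γ, ⟨hγ0, hγ1⟩, δ, ⟨hδ0, hδ1⟩, rfl⟩ :=
    exists_isLatticePoint_ne_zero_mem_parallelogram ha hb h
  by_cases hsum : γ + δ ≤ 1
  · exact ⟨_, hz, hz0, γ, δ, hγ0, hδ0, hγ1, hδ1, hsum, rfl⟩
  have hrefl : a + b - (γ • a + δ • b) = (1 - γ) • a + (1 - δ) • b := by module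
  refine ⟨a + b - (γ • a + δ • b), ?_, fun h0 ↦ ?_, 1 - γ, 1 - δ, by linarith, by linarith,
    by linarith, by linarith, by linarith, hrefl⟩
  · rw [isLatticePoint_iff_mem_span] at *
    exact sub_mem (add_mem ha hb) hz
  · have := congrArg (cross · b) (hrefl ▸ h0)
    simp only [cross_smul_add_smul_left] at this
    have : cross a b = 0 := by simpa [cross, sub_eq_zero, hγ1.ne'] using this
    norm_num [this] at h

theorem isLatticePoint_of_dotProduct_eq_intCast {a b u : Fin 2 → ℝ} (ha : IsLatticePoint a)
    (hb : IsLatticePoint b) (hab : |cross a b| = 1) {m n : ℤ} (hua : u ⬝ᵥ a = m)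
    (hub : u ⬝ᵥ b = n) : IsLatticePoint u := by
  obtain ⟨c, hc⟩ := ha.cross hb
  have hc2 : (c : ℝ) * c = 1 := by rw [← hc, ← abs_mul_abs_self, hab, one_mul]
  obtain ⟨⟨a₀, ha₀⟩, ⟨a₁, ha₁⟩⟩ := And.intro (ha 0) (ha 1)
  obtain ⟨⟨b₀, hb₀⟩, ⟨b₁, hb₁⟩⟩ := And.intro (hb 0) (hb 1)
  simp only [dotProduct, Fin.sum_univ_two, ha₀, ha₁, hb₀, hb₁] at hua hub
  simp only [cross, ha₀, ha₁, hb₀, hb₁] at hc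
  refine Fin.forall_fin_two.mpr ⟨⟨c * (m * b₁ - n * a₁), ?_⟩, ⟨c * (n * a₀ - m * b₀), ?_⟩⟩ <;>
    push_cast
  · linear_combination (c * b₁ : ℝ) * hua - (c * a₁ : ℝ) * hub - (c * u 0 : ℝ) * hc - u 0 * hc2
  · linear_combination (c * a₀ : ℝ) * hub - (c * b₀ : ℝ) * hua - (c * u 1 : ℝ) * hc - u 1 * hc2

theorem isLatticePoint_of_dotProduct_eq_neg_one {P : Set (Fin 2 → ℝ)} (hP : Convex ℝ P)
    (h0 : 0 ∈ interior P) (hcan : IsCanonical P) {u a : Fin 2 → ℝ} (ha : IsLatticePoint a)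
    (haP : a ∈ P) (hua : u ⬝ᵥ a = -1) {b : Fin 2 → ℝ} (hb : IsLatticePoint b) (hbP : b ∈ P)
    (hub : u ⬝ᵥ b = -1) (hab : cross a b ≠ 0) : IsLatticePoint u := by
  obtain ⟨k, hk⟩ := ha.cross hb
  induction hN : k.natAbs using Nat.strong_induction_on generalizing b k with
  | _ N ih =>
  have hk0 : k ≠ 0 := by rintro rfl; exact hab (by simpa using hk)
  have habs : |cross a b| = ((k.natAbs : ℤ) : ℝ) := by rw [hk, ← Int.cast_abs, Int.abs_eq_natAbs]
  rcases (by omega : k.natAbs = 1 ∨ 2 ≤ k.natAbs) with h1 | h2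
  · exact isLatticePoint_of_dotProduct_eq_intCast ha hb (by rw [habs, h1]; simp)
      (m := -1) (by simp [hua]) (n := -1) (by simp [hub])
  obtain ⟨z, hz, hz0, γ, δ, hγ, hδ, hγ1, hδ1, hsum, rfl⟩ :=
    exists_isLatticePoint_ne_zero_mem_triangle ha hb (by rw [habs]; exact_mod_cast h2)
  rcases hsum.lt_or_eq with hlt | heq
  · exact absurd (hcan _ (hP.smul_add_smul_mem_interior h0 haP hbP hγ hδ hlt) hz) hz0
  -- `z` is a lattice point on the edge `[a, b]`: it replaces `b`
  have hδ0 : 0 < δ := by linarith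
  obtain ⟨k', hk'⟩ := ha.cross hz
  have hcross : cross a (γ • a + δ • b) = δ * cross a b := cross_smul_add_smul_right γ δ a b
  refine ih k'.natAbs ?_ hz (hP haP hbP hγ hδ heq) ?_ ?_ k' hk' rfl
  · have : |(k' : ℝ)| < |(k : ℝ)| := by
      rw [← hk', ← hk, hcross, abs_mul, abs_of_pos hδ0]
      exact mul_lt_of_lt_one_left (abs_pos.mpr hab) hδ1
    rw [← hN]
    have : |k'| < |k| := by exact_mod_cast this
    rw [Int.abs_eq_natAbs, Int.abs_eq_natAbs] at this
    omega
  · simp only [dotProduct_add, dotProduct_smul, hua, hub, smul_eq_mul]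
    linarith
  · rw [hcross]; exact mul_ne_zero hδ0.ne' hab

theorem exists_cross_ne_zero_of_mem_extremePoints_polarDual {S : Set (Fin 2 → ℝ)}
    (hS : S.Finite) {u : Fin 2 → ℝ} (hu : u ∈ (polarDual S).extremePoints ℝ) :
    ∃ a ∈ S, ∃ b ∈ S, u ⬝ᵥ a = -1 ∧ u ⬝ᵥ b = -1 ∧ cross a b ≠ 0 := by
  obtain ⟨a, haS, hua⟩ : ∃ a ∈ S, u ⬝ᵥ a = -1 := by
    by_contra! h
    have := eq_zero_of_mem_extremePoints_polarDual hS hu (w := Pi.single 0 1)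
      fun s hs hact ↦ absurd hact (h s hs)
    simpa using congrFun this 0
  by_contra! h
  have hrot := eq_zero_of_mem_extremePoints_polarDual hS hu (w := ![-a 1, a 0])
    fun s hs hus ↦ by
      have := h a haS s hs hua hus
      simp only [cross] at this
      simp only [dotProduct, Fin.sum_univ_two, Matrix.cons_val_zero, Matrix.cons_val_one,
        Matrix.cons_val_fin_one]
      linarith
  have ha0 : a = 0 :=
    funext (Fin.forall_fin_two.mpr ⟨by simpa using congrFun hrot 1, by simpa using congrFun hrot 0⟩)
  simp [ha0] at hua

theorem isLatticePoint_of_mem_extremePoints_polarDual {S : Set (Fin 2 → ℝ)} (hS : S.Finite)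
    (hSlat : ∀ s ∈ S, IsLatticePoint s) (h0 : 0 ∈ interior (convexHull ℝ S))
    (hcan : IsCanonical (convexHull ℝ S)) {u : Fin 2 → ℝ}
    (hu : u ∈ (polarDual (convexHull ℝ S)).extremePoints ℝ) : IsLatticePoint u := by
  rw [polarDual_convexHull] at hu
  obtain ⟨a, haS, b, hbS, hua, hub, hab⟩ :=
    exists_cross_ne_zero_of_mem_extremePoints_polarDual hS hu
  exact isLatticePoint_of_dotProduct_eq_neg_one (convex_convexHull ℝ S) h0 hcan (hSlat a haS)
    (subset_convexHull ℝ S haS) hua (hSlat b hbS) (subset_convexHull ℝ S hbS) hub hab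

end Plane

/-- For a lattice polygon with the origin in its interior, canonical is
equivalent to reflexive. -/
theorem canonical_iff_reflexive (P : Set (Fin 2 → ℝ))
    (hP : IsLatticePolytope P) (h0 : 0 ∈ interior P) :
    IsCanonical P ↔ IsLatticePolytope (polarDual P) := by
  obtain ⟨S, hSlat, rfl⟩ := hP
  refine ⟨fun hcan ↦ ?_, isCanonical_convexHull_of_isLatticePolytope_polarDual S.finite_toSet⟩
  exact (isCompact_polarDual h0).isLatticePolytope (convex_polarDual _)
    fun u hu ↦ isLatticePoint_of_mem_extremePoints_polarDual S.finite_toSet hSlat h0 hcan hu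
end
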